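/- There exists a simple graph on 17 vertices that does not contain the book B_5 as a (not necessarily induced) subgraph and whose complement does not contain the book B_4 as a (not necessarily induced) subgraph. -/

import Mathlib

open SimpleGraph

/-- `ContainsCopy G H` means the graph `H` contains a copy of `G` as a
(not necessarily induced) subgraph. -/
def ContainsCopy {α β : Type*} (G : SimpleGraph α) (H : SimpleGraph β) : Prop :=
  ∃ f : α → β, Function.Injective f ∧ ∀ ⦃u v : α⦄, G.Adj u v → H.Adj (f u) (f v)

/-- The join `G + H` of two graphs: take disjoint copies of `G` and `H` and add
all edges between them. -/
def graphJoin {α β : Type*} (G : SimpleGraph α) (H : SimpleGraph β) :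
    SimpleGraph (α ⊕ β) where
  Adj u v :=
    match u, v with
    | .inl a, .inl b => G.Adj a b
    | .inr a, .inr b => H.Adj a b
    | .inl _, .inr _ => True
    | .inr _, .inl _ => True
  symm := by
    constructor
    intro u v h
    cases u <;> cases v <;> simp_all <;> exact h.symm
  loopless := by
    constructor
    intro u
    cases u <;> simp

/-- The wheel `W n`: the join of a single vertex with a cycle on `n - 1` vertices. -/
def wheelGraph (n : ℕ) : SimpleGraph (Fin 1 ⊕ Fin (n - 1)) :=
  graphJoin (⊥ : SimpleGraph (Fin 1)) (cycleGraph (n - 1))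

/-- The book `B n`: the join of an edge `K₂` with an empty graph on `n` vertices. -/
def bookGraph (n : ℕ) : SimpleGraph (Fin 2 ⊕ Fin n) :=
  graphJoin (⊤ : SimpleGraph (Fin 2)) (⊥ : SimpleGraph (Fin n))

/-- The two-colour graph Ramsey number `R(G₁, G₂)`: the least `n` such that every
simple graph `G` on `n` vertices contains a copy of `G₁`, or its complement
contains a copy of `G₂`. -/
noncomputable def ramseyNumber {α β : Type*} (G₁ : SimpleGraph α) (G₂ : SimpleGraph β) : ℕ :=
  sInf {n : ℕ | ∀ G : SimpleGraph (Fin n), ContainsCopy G₁ G ∨ ContainsCopy G₂ Gᶜ}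

def palS : Finset (Fin 17) := {1, 2, 4, 8, 9, 13, 15, 16}

def pal : SimpleGraph (Fin 17) where
  Adj x y := x - y ∈ palS
  symm := by
    constructor
    intro x y h
    have : ∀ a : Fin 17, a ∈ palS → -a ∈ palS := by decide
    have := this _ h
    simpa [neg_sub] using this
  loopless := by constructor; intro x; simp [palS]

instance : DecidableRel pal.Adj := fun x y => by unfold pal; infer_instance

lemma book_copy_common {n : ℕ} {H : SimpleGraph (Fin 17)} [DecidableRel H.Adj]
    (h : ContainsCopy (bookGraph n) H) :
    ∃ u v : Fin 17, H.Adj u v ∧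
      n ≤ (Finset.univ.filter (fun w => H.Adj u w ∧ H.Adj v w)).card := by
  obtain ⟨f, hinj, hadj⟩ := h
  refine ⟨f (.inl 0), f (.inl 1), hadj (by simp [bookGraph, graphJoin]), ?_⟩
  have hmem : ∀ i : Fin n,
      f (.inr i) ∈ Finset.univ.filter
        (fun w => H.Adj (f (.inl 0)) w ∧ H.Adj (f (.inl 1)) w) := by
    intro i
    simp only [Finset.mem_filter, Finset.mem_univ, true_and]
    exact ⟨hadj trivial, hadj trivial⟩
  have := Finset.card_le_card_of_injOn (s := (Finset.univ : Finset (Fin n)))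
    (f := fun i : Fin n => f (.inr i))
    (fun i _ => hmem i) (fun a _ b _ hab => by
      have := hinj hab; simpa using this)
  simpa using this

/-- There is a simple graph on 17 vertices not containing the book `B₅` as a
subgraph, whose complement does not contain the book `B₄` as a subgraph. -/
theorem exists_critical_graph_B4_B5 :
    ∃ G : SimpleGraph (Fin 17),
      ¬ ContainsCopy (bookGraph 5) G ∧ ¬ ContainsCopy (bookGraph 4) Gᶜ := by
  refine ⟨pal, ?_, ?_⟩
  · intro h
    obtain ⟨u, v, huv, hcard⟩ := book_copy_common h
    have key : ∀ u v : Fin 17, pal.Adj u v →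
        (Finset.univ.filter (fun w => pal.Adj u w ∧ pal.Adj v w)).card ≤ 4 := by decide
    exact absurd (le_trans hcard (key u v huv)) (by norm_num)
  · intro h
    obtain ⟨u, v, huv, hcard⟩ := book_copy_common h
    have key : ∀ u v : Fin 17, palᶜ.Adj u v →
        (Finset.univ.filter (fun w => palᶜ.Adj u w ∧ palᶜ.Adj v w)).card ≤ 3 := by decide
    exact absurd (le_trans hcard (key u v huv)) (by norm_num)
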